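/- Let d ≥ 2 and let y ∈ F_2[x_1,…,x_d] be a nonzero homogeneous polynomial of degree 1. Then there exists a homogeneous polynomial z of degree 1 such that y·z − x_1² ∈ J. -/

import Mathlib

open MvPolynomial

abbrev S4 : Type := ZMod 2 × ZMod 2

def Sα (s : S4) : ZMod 2 := s.1
def Sβ (s : S4) : ZMod 2 := s.2

def s0 : S4 := (0, 0)
def s1 : S4 := (1, 1)
def s2 : S4 := (1, 0)
def s3 : S4 := (0, 1)

/-- The linear form `α_j^A = Σ_i α(A_{ij}) x_i`. -/
noncomputable def alphaP {d : ℕ} {ι : Type*} (A : Matrix (Fin d) ι S4) (j : ι) :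
    MvPolynomial (Fin d) (ZMod 2) := ∑ i, C (Sα (A i j)) * X i

/-- The linear form `β_j^A = Σ_i β(A_{ij}) x_i`. -/
noncomputable def betaP {d : ℕ} {ι : Type*} (A : Matrix (Fin d) ι S4) (j : ι) :
    MvPolynomial (Fin d) (ZMod 2) := ∑ i, C (Sβ (A i j)) * X i

/-- `θ_j^A = α_j^A · β_j^A`. -/
noncomputable def thetaP {d : ℕ} {ι : Type*} (A : Matrix (Fin d) ι S4) (j : ι) :
    MvPolynomial (Fin d) (ZMod 2) := alphaP A j * betaP A j

/-- The characteristic ideal `I_A = ⟨θ_1^A, …, θ_n^A⟩`. -/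
noncomputable def charIdeal {d : ℕ} {ι : Type*} (A : Matrix (Fin d) ι S4) :
    Ideal (MvPolynomial (Fin d) (ZMod 2)) := Ideal.span (Set.range (thetaP A))

/-- The Stiefel–Whitney polynomial `w(A) = Π_j (1 + α_j^A + β_j^A)`. -/
noncomputable def swPoly {d : ℕ} {ι : Type*} [Fintype ι] (A : Matrix (Fin d) ι S4) :
    MvPolynomial (Fin d) (ZMod 2) := ∏ j, (1 + alphaP A j + betaP A j)

/-- The ideal `J = ⟨{x_i² + x_j² : i ≠ j} ∪ {x_i x_j : i ≠ j}⟩`. -/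
noncomputable def Jideal (d : ℕ) : Ideal (MvPolynomial (Fin d) (ZMod 2)) :=
  Ideal.span ({q | ∃ i j : Fin d, i ≠ j ∧ q = X i ^ 2 + X j ^ 2} ∪
              {q | ∃ i j : Fin d, i ≠ j ∧ q = X i * X j})

/-- `A₀ ∈ S^{d×(d-1)}`: the `l`-th column has entry `1` in rows `l` and `d`, `0` elsewhere. -/
def matA0 (d : ℕ) : Matrix (Fin d) (Fin (d - 1)) S4 :=
  fun i l => if i.val = l.val ∨ i.val = d - 1 then s1 else s0

/-- Index set for the columns of `A₁`: pairs `1 ≤ i < j ≤ d`. -/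
abbrev PairIdx (d : ℕ) : Type := {p : Fin d × Fin d // p.1 < p.2}

/-- `A₁ ∈ S^{d×(d(d-1)/2)}`: the column indexed by `i < j` has entry `2` in row `i`,
entry `3` in row `j` and `0` elsewhere. -/
def matA1 (d : ℕ) : Matrix (Fin d) (PairIdx d) S4 :=
  fun i p => if i = p.1.1 then s2 else if i = p.1.2 then s3 else s0

/-- `A = [A₀, A₁]`. -/
def matA (d : ℕ) : Matrix (Fin d) (Fin (d - 1) ⊕ PairIdx d) S4 :=
  Matrix.fromCols (matA0 d) (matA1 d)

/-- `B ∈ S^{d×1}`: all entries `2`. -/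
def matB (d : ℕ) : Matrix (Fin d) (Fin 1) S4 := fun _ _ => s2

/-- `C ∈ S^{d×1}`: entry `2` in row `1`, `0` elsewhere. -/
def matC (d : ℕ) : Matrix (Fin d) (Fin 1) S4 := fun i _ => if i.val = 0 then s2 else s0

/-- `E = [A,B,C,C]` (the case `d ≡ 0 mod 2`). -/
def matE0 (d : ℕ) := Matrix.fromCols (matA d)
  (Matrix.fromCols (matB d) (Matrix.fromCols (matC d) (matC d)))

/-- `E = [A,B,B]` (the case `d ≡ 1 mod 4`). -/
def matE1 (d : ℕ) := Matrix.fromCols (matA d) (Matrix.fromCols (matB d) (matB d))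

/-- `F = [E,C,C,C,C] = [A,C,C,C,C]` (the case `d ≡ 3 mod 4`; there `E = A`). -/
def matF3 (d : ℕ) := Matrix.fromCols (matA d)
  (Matrix.fromCols (matC d)
    (Matrix.fromCols (matC d) (Matrix.fromCols (matC d) (matC d))))

/-
Modulo `J` all mixed products `x_i x_j` vanish and all squares `x_i²` agree. Hence for a linear
form `y` whose coefficient at `x_i` is nonzero, i.e. `1`, taking `z = x_i` gives
`y z ≡ x_i² ≡ x_1² (mod J)`.
-/

namespace MvPolynomial

variable {R σ : Type*} [CommSemiring R]

theorem IsHomogeneous.exists_coeff_single_ne_zero {p : MvPolynomial σ R}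
    (hp : p.IsHomogeneous 1) (hp0 : p ≠ 0) : ∃ i, coeff (Finsupp.single i 1) p ≠ 0 := by
  obtain ⟨m, hm⟩ := exists_coeff_ne_zero hp0
  obtain ⟨i, rfl⟩ : m ∈ Set.range (Finsupp.single · 1) := by
    rw [Finsupp.range_single_one, Set.mem_ofPred_eq, Finsupp.degree_eq_weight_one]
    exact hp hm
  exact ⟨i, hm⟩

theorem IsHomogeneous.eq_sum_C_mul_X [Fintype σ] {p : MvPolynomial σ R}
    (hp : p.IsHomogeneous 1) : p = ∑ i, C (coeff (Finsupp.single i 1) p) * X i := by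
  classical
  ext m
  simp only [coeff_sum, coeff_C_mul, coeff_X, mul_ite, mul_one, mul_zero]
  by_cases hm : m ∈ Set.range (Finsupp.single · 1)
  · obtain ⟨j, rfl⟩ := hm
    simp [Finsupp.single_left_inj]
  · have hdeg : m.degree ≠ 1 := fun h => hm (Finsupp.range_single_one ▸ h)
    rw [hp.coeff_eq_zero hdeg, Finset.sum_eq_zero]
    rintro i -
    exact if_neg fun h => hm ⟨i, h⟩

end MvPolynomial

section Jideal

variable {d : ℕ}

theorem X_mul_X_mem_Jideal {i j : Fin d} (hij : i ≠ j) : X i * X j ∈ Jideal d :=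
  Ideal.subset_span (Or.inr ⟨i, j, hij, rfl⟩)

theorem X_sq_sub_X_sq_mem_Jideal (i j : Fin d) : X i ^ 2 - X j ^ 2 ∈ Jideal d := by
  rcases eq_or_ne i j with rfl | hij
  · rw [sub_self]
    exact Ideal.zero_mem _
  · rw [CharTwo.sub_eq_add]
    exact Ideal.subset_span (Or.inl ⟨i, j, hij, rfl⟩)

theorem mul_X_sub_C_coeff_mul_X_sq_mem_Jideal {y : MvPolynomial (Fin d) (ZMod 2)}
    (hy : y.IsHomogeneous 1) (i : Fin d) :
    y * X i - C (coeff (Finsupp.single i 1) y) * X i ^ 2 ∈ Jideal d := by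
  rw [← Ideal.Quotient.eq]
  conv_lhs => rw [hy.eq_sum_C_mul_X, Finset.sum_mul, map_sum]
  rw [Finset.sum_eq_single i]
  · rw [mul_assoc, sq]
  · intro j _ hji
    rw [mul_assoc, map_mul, Ideal.Quotient.eq_zero_iff_mem.mpr (X_mul_X_mem_Jideal hji), mul_zero]
  · exact fun hi => absurd (Finset.mem_univ i) hi

end Jideal

/-- for every nonzero homogeneous linear `y` there is a homogeneous
linear `z` with `y·z - x₁² ∈ J`. -/
theorem linear_complement (d : ℕ) (hd : 2 ≤ d) (y : MvPolynomial (Fin d) (ZMod 2))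
    (hy1 : y.IsHomogeneous 1) (hy0 : y ≠ 0) :
    ∃ z : MvPolynomial (Fin d) (ZMod 2), z.IsHomogeneous 1 ∧
      y * z - X (⟨0, by omega⟩ : Fin d) ^ 2 ∈ Jideal d := by
  obtain ⟨i, hi⟩ := hy1.exists_coeff_single_ne_zero hy0
  have hi_one : coeff (Finsupp.single i 1) y = 1 := Fin.eq_one_of_ne_zero _ hi
  refine ⟨X i, isHomogeneous_X _ _, ?_⟩
  have hyX := mul_X_sub_C_coeff_mul_X_sq_mem_Jideal hy1 i
  rw [hi_one, map_one, one_mul] at hyX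
  rw [← sub_add_sub_cancel _ (X i ^ 2)]
  exact Ideal.add_mem _ hyX (X_sq_sub_X_sq_mem_Jideal i _)
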